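/- arXiv:1102.4409 — 2 statements merged into one kernel-verified Lean document; each statement's English description precedes it below -/
import Mathlib

section
/- Let G be a weighted graph on n vertices with all degrees positive and let 0 ≤ α ≤ 1. Let π be the row vector with π(u) = d_u/vol(G), let f_0 be any vertex probability distribution on V (a row vector with nonnegative entries summing to 1), and let f_k = f_0 P_α^k for k ≥ 0. Then ‖(f_k − π) T^{-1/2}‖ ≤ (λ̄_α)^k · ‖(f_0 − π) T^{-1/2}‖, where λ̄_α = max{|1 − (1−α)λ_1|, |1 − (1−α)λ_{n−1}|}. -/
/-!
Conjugation by `T^{-1/2}` turns the lazy walk into the symmetric matrix `M = I - (1-α) L`: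
`T^{-1/2} M = P_α T^{-1/2}`. As `π` is stationary, `(f_k - π) T^{-1/2} = g M^k` with
`g = (f_0 - π) T^{-1/2}`, and `g` is orthogonal to the kernel vector `T^{1/2} 𝟙` of `L`.
At most one vector of an orthonormal eigenbasis of `L` has eigenvalue below `λ_1`; if there is one,
all the others have positive eigenvalues because `L` is positive semidefinite, so `T^{1/2} 𝟙` is a
multiple of it. Hence `g` only has components along eigenvalues in `[λ_1, λ_{n-1}]`, where
`|1 - (1-α) λ| ≤ λ̄_α` because the modulus of an affine function on an interval peaks at an endpoint.
-/

open Matrix Polynomial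

noncomputable section

/-- The degree of a vertex in a weighted graph with weight function `w`. -/
def wdeg {V : Type*} [Fintype V] (w : V → V → ℝ) (x : V) : ℝ := ∑ y, w x y

/-- The diagonal matrix `T^{-1/2}` of a weighted graph. -/
def invSqrtT {V : Type*} [Fintype V] [DecidableEq V] (w : V → V → ℝ) : Matrix V V ℝ :=
  Matrix.diagonal fun x => (Real.sqrt (wdeg w x))⁻¹

/-- The (normalized) Laplacian `I - T^{-1/2} A T^{-1/2}` of a weighted graph. -/
def wLap {V : Type*} [Fintype V] [DecidableEq V] (w : V → V → ℝ) : Matrix V V ℝ :=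
  1 - invSqrtT w * Matrix.of w * invSqrtT w

/-- The volume of a set of vertices of a weighted graph. -/
def wvol {V : Type*} [Fintype V] (w : V → V → ℝ) (X : Finset V) : ℝ := ∑ x ∈ X, wdeg w x

/-- The transition matrix `P_α = α I + (1-α) T⁻¹ A` of the `α`-lazy random walk. -/
def wTrans {V : Type*} [Fintype V] [DecidableEq V] (w : V → V → ℝ) (α : ℝ) : Matrix V V ℝ :=
  α • (1 : Matrix V V ℝ) + (1 - α) • ((Matrix.diagonal fun x => (wdeg w x)⁻¹) * Matrix.of w)

/-- Euclidean norm of a (row or column) vector. -/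
def euclNorm {m : Type*} [Fintype m] (f : m → ℝ) : ℝ := Real.sqrt (∑ x, f x ^ 2)

/-- `μ` lists the eigenvalues of the square matrix `M` (with multiplicity)
in non-decreasing order. -/
def IsEigenSeq {m : Type*} [Fintype m] [DecidableEq m] (M : Matrix m m ℝ) {n : ℕ}
    (μ : Fin n → ℝ) : Prop :=
  Monotone μ ∧ M.charpoly = ∏ i, (X - C (μ i))

open Finset Unitary

section OrthogonalDiagonalization

variable {ι : Type*} [Fintype ι] [DecidableEq ι]

lemma vecMul_pow_eq_self {M : Matrix ι ι ℝ} {x : ι → ℝ} (hx : x ᵥ* M = x) (k : ℕ) :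
    x ᵥ* M ^ k = x := by
  induction k with
  | zero => rw [pow_zero, vecMul_one]
  | succ k ih => rw [pow_succ, ← vecMul_vecMul, ih, hx]

lemma euclNorm_vecMul_unitary (U : unitaryGroup ι ℝ) (x : ι → ℝ) :
    euclNorm (x ᵥ* (U : Matrix ι ι ℝ)) = euclNorm x := by
  have hU : (U : Matrix ι ι ℝ) * (U : Matrix ι ι ℝ)ᵀ = 1 := Matrix.mem_unitaryGroup_iff.mp U.2
  have hsq : ∀ v : ι → ℝ, ∑ i, v i ^ 2 = v ⬝ᵥ v := fun v => by simp [dotProduct, sq]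
  rw [euclNorm, euclNorm, hsq, hsq]
  congr 1
  calc (x ᵥ* (U : Matrix ι ι ℝ)) ⬝ᵥ (x ᵥ* (U : Matrix ι ι ℝ))
      = (x ᵥ* (U : Matrix ι ι ℝ)) ⬝ᵥ ((U : Matrix ι ι ℝ)ᵀ *ᵥ x) := by rw [mulVec_transpose]
    _ = x ⬝ᵥ x := by rw [dotProduct_mulVec, vecMul_vecMul, hU, vecMul_one]

lemma spectral_theorem_real {A : Matrix ι ι ℝ} (hA : A.IsHermitian) :
    A = conjStarAlgAut ℝ _ hA.eigenvectorUnitary (diagonal hA.eigenvalues) := by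
  simpa [RCLike.ofReal_real_eq_id] using hA.spectral_theorem

lemma one_sub_smul_pow_eq_conj {A : Matrix ι ι ℝ} (hA : A.IsHermitian) (c : ℝ) (k : ℕ) :
    (1 - c • A) ^ k = conjStarAlgAut ℝ _ hA.eigenvectorUnitary
      (diagonal fun i => (1 - c * hA.eigenvalues i) ^ k) := by
  conv_lhs => rw [spectral_theorem_real hA]
  rw [← map_one (conjStarAlgAut ℝ _ hA.eigenvectorUnitary), ← map_smul, ← map_sub, ← map_pow,
    ← diagonal_one, ← diagonal_smul, diagonal_sub, diagonal_pow]
  rfl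

lemma euclNorm_vecMul_conj_diagonal_le (U : unitaryGroup ι ℝ) (d g : ι → ℝ) {B : ℝ} (hB : 0 ≤ B)
    (hd : ∀ i, (g ᵥ* (U : Matrix ι ι ℝ)) i ≠ 0 → |d i| ≤ B) :
    euclNorm (g ᵥ* conjStarAlgAut ℝ _ U (diagonal d)) ≤ B * euclNorm g := by
  set q := g ᵥ* (U : Matrix ι ι ℝ)
  have hterm : ∀ i, (q i * d i) ^ 2 ≤ B ^ 2 * q i ^ 2 := fun i => by
    by_cases hqi : q i = 0
    · simp [hqi]
    · rw [mul_pow, mul_comm, ← sq_abs (d i)]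
      gcongr
      exact hd i hqi
  calc euclNorm (g ᵥ* conjStarAlgAut ℝ _ U (diagonal d))
      = euclNorm (fun i => q i * d i) := by
        rw [conjStarAlgAut_apply, ← vecMul_vecMul, ← vecMul_vecMul, ← Unitary.coe_star,
          euclNorm_vecMul_unitary (star U)]
        exact congrArg euclNorm (funext fun i => vecMul_diagonal _ _ i)
    _ ≤ Real.sqrt (B ^ 2 * ∑ i, q i ^ 2) := by
        rw [euclNorm, mul_sum]
        exact Real.sqrt_le_sqrt (sum_le_sum fun i _ => hterm i)
    _ = B * euclNorm g := by
        rw [Real.sqrt_mul (sq_nonneg B), Real.sqrt_sq hB, ← euclNorm, euclNorm_vecMul_unitary]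

lemma vecMul_eigenvectorUnitary_apply_eq_zero {A : Matrix ι ι ℝ} (hA : A.IsHermitian)
    {φ g : ι → ℝ} (hφ : φ ≠ 0) (hAφ : A *ᵥ φ = 0) (hgφ : g ⬝ᵥ φ = 0) {i : ι}
    (hi : ∀ j ≠ i, hA.eigenvalues j ≠ 0) :
    (g ᵥ* (hA.eigenvectorUnitary : Matrix ι ι ℝ)) i = 0 := by
  set U := hA.eigenvectorUnitary
  set c := star (U : Matrix ι ι ℝ) *ᵥ φ
  have hUc : U *ᵥ c = φ := by
    rw [mulVec_mulVec, Unitary.mul_star_self_of_mem U.2, one_mulVec]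
  have hDU : star (U : Matrix ι ι ℝ) * A = diagonal hA.eigenvalues * star (U : Matrix ι ι ℝ) := by
    conv_lhs => rw [spectral_theorem_real hA]
    rw [conjStarAlgAut_apply, ← mul_assoc, ← mul_assoc, Unitary.star_mul_self_of_mem U.2, one_mul]
  have hDc : diagonal hA.eigenvalues *ᵥ c = 0 := by
    rw [mulVec_mulVec, ← hDU, ← mulVec_mulVec, hAφ, mulVec_zero]
  have hc : ∀ j, hA.eigenvalues j * c j = 0 := fun j => by
    simpa [mulVec_diagonal] using congrFun hDc j
  have hc_single : c = Pi.single i (c i) := funext fun j => by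
    by_cases hj : j = i
    · subst hj; simp
    · simpa [hj] using (mul_eq_zero.mp (hc j)).resolve_left (hi j hj)
  have hci : c i ≠ 0 := fun h0 => hφ <| by rw [← hUc, hc_single, h0, Pi.single_zero, mulVec_zero]
  have : (g ᵥ* U) i * c i = 0 := by
    rw [← hgφ, ← hUc, dotProduct_mulVec, hc_single, dotProduct_single, Pi.single_eq_same]
  exact (mul_eq_zero.mp this).resolve_right hci

end OrthogonalDiagonalization

lemma abs_one_sub_mul_le_max (c : ℝ) {a b x : ℝ} (hax : a ≤ x) (hxb : x ≤ b) :
    |1 - c * x| ≤ max |1 - c * a| |1 - c * b| := by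
  rcases le_total 0 c with hc | hc
  · rw [max_comm]
    exact abs_le_max_abs_abs (by nlinarith) (by nlinarith)
  · exact abs_le_max_abs_abs (by nlinarith) (by nlinarith)

namespace IsEigenSeq

variable {ι : Type*} [Fintype ι] [DecidableEq ι] {A : Matrix ι ι ℝ} {n : ℕ} {μ : Fin n → ℝ}

lemma map_eigenvalues (hA : A.IsHermitian) (hμ : IsEigenSeq A μ) :
    univ.val.map hA.eigenvalues = univ.val.map μ := by
  have h := hA.roots_charpoly_eq_eigenvalues
  rw [hμ.2, RCLike.ofReal_real_eq_id, Function.id_comp] at h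
  rw [← h]
  conv_rhs => rw [← roots_multiset_prod_X_sub_C (univ.val.map μ), Multiset.map_map]
  rfl

lemma exists_eq (hA : A.IsHermitian) (hμ : IsEigenSeq A μ) (i : ι) :
    ∃ j, μ j = hA.eigenvalues i := by
  have hmem : hA.eigenvalues i ∈ univ.val.map μ :=
    hμ.map_eigenvalues hA ▸ Multiset.mem_map_of_mem _ (mem_univ i)
  simpa using hmem

lemma eigenvalues_le (hA : A.IsHermitian) (hμ : IsEigenSeq A μ) (h : n - 1 < n) (i : ι) :
    hA.eigenvalues i ≤ μ ⟨n - 1, h⟩ := by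
  obtain ⟨j, hj⟩ := hμ.exists_eq hA i
  exact hj ▸ hμ.1 (Fin.mk_le_mk.mpr (by omega))

lemma card_filter_eigenvalues_lt (hA : A.IsHermitian) (hμ : IsEigenSeq A μ) (t : ℝ) :
    #{i | hA.eigenvalues i < t} = #{j | μ j < t} := by
  have h := congrArg (Multiset.countP (· < t)) (hμ.map_eigenvalues hA)
  rwa [Multiset.countP_map, Multiset.countP_map] at h

lemma eq_of_eigenvalues_lt (hA : A.IsHermitian) (hμ : IsEigenSeq A μ) (h : 1 < n) {i i' : ι}
    (hi : hA.eigenvalues i < μ ⟨1, h⟩) (hi' : hA.eigenvalues i' < μ ⟨1, h⟩) : i = i' := by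
  have hμ_lt : ∀ j, μ j < μ ⟨1, h⟩ → j = ⟨0, by omega⟩ := fun j hj =>
    Fin.ext <| Nat.lt_one_iff.mp <| not_le.mp fun hj1 => hj.not_ge (hμ.1 (Fin.mk_le_mk.mpr hj1))
  have hcard : #{j | μ j < μ ⟨1, h⟩} ≤ 1 :=
    card_le_one.mpr fun a ha b hb => by
      rw [hμ_lt a (mem_filter.mp ha).2, hμ_lt b (mem_filter.mp hb).2]
  rw [← hμ.card_filter_eigenvalues_lt hA] at hcard
  exact card_le_one.mp hcard i (by simpa using hi) i' (by simpa using hi')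

lemma le_eigenvalues_of_vecMul_ne_zero (hA : A.PosSemidef) (hμ : IsEigenSeq A μ) (h : 1 < n)
    {φ g : ι → ℝ} (hφ : φ ≠ 0) (hAφ : A *ᵥ φ = 0) (hgφ : g ⬝ᵥ φ = 0) {i : ι}
    (hi : (g ᵥ* (hA.1.eigenvectorUnitary : Matrix ι ι ℝ)) i ≠ 0) :
    μ ⟨1, h⟩ ≤ hA.1.eigenvalues i := by
  by_contra! hlt
  refine hi (vecMul_eigenvectorUnitary_apply_eq_zero hA.1 hφ hAφ hgφ fun j hj => ?_)
  have hj_ge : μ ⟨1, h⟩ ≤ hA.1.eigenvalues j :=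
    not_lt.mp fun hjlt => hj (hμ.eq_of_eigenvalues_lt hA.1 h hjlt hlt)
  exact (lt_of_le_of_lt (hA.eigenvalues_nonneg i) (hlt.trans_le hj_ge)).ne'

theorem euclNorm_vecMul_one_sub_smul_pow_le (hA : A.PosSemidef) (hμ : IsEigenSeq A μ) (h : 1 < n)
    {φ g : ι → ℝ} (hφ : φ ≠ 0) (hAφ : A *ᵥ φ = 0) (hgφ : g ⬝ᵥ φ = 0) (c : ℝ) (k : ℕ) :
    euclNorm (g ᵥ* (1 - c • A) ^ k) ≤
      max |1 - c * μ ⟨1, h⟩| |1 - c * μ ⟨n - 1, by omega⟩| ^ k * euclNorm g := by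
  rw [one_sub_smul_pow_eq_conj hA.1]
  refine euclNorm_vecMul_conj_diagonal_le _ _ _
    (pow_nonneg (le_max_of_le_left (abs_nonneg _)) k) fun i hi => ?_
  rw [abs_pow]
  exact pow_le_pow_left₀ (abs_nonneg _) (abs_one_sub_mul_le_max c
    (hμ.le_eigenvalues_of_vecMul_ne_zero hA h hφ hAφ hgφ hi) (hμ.eigenvalues_le hA.1 _ i)) k

end IsEigenSeq

section WeightedGraph

variable {V : Type*} [Fintype V] [DecidableEq V] {w : V → V → ℝ}

lemma invSqrtT_mul_invSqrtT (hdeg : ∀ x, 0 < wdeg w x) :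
    invSqrtT w * invSqrtT w = diagonal fun x => (wdeg w x)⁻¹ := by
  rw [invSqrtT, diagonal_mul_diagonal]
  congr 1
  funext x
  rw [← mul_inv, Real.mul_self_sqrt (hdeg x).le]

lemma wLap_eq (hdeg : ∀ x, 0 < wdeg w x) :
    wLap w = invSqrtT w * (diagonal (wdeg w) - of w) * invSqrtT w := by
  have hT : invSqrtT w * diagonal (wdeg w) * invSqrtT w = 1 := by
    rw [mul_assoc, invSqrtT, diagonal_mul_diagonal, diagonal_mul_diagonal, ← diagonal_one]
    congr 1
    funext x
    have := (Real.sqrt_pos.mpr (hdeg x)).ne'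
    field_simp
    exact (Real.sq_sqrt (hdeg x).le).symm
  rw [wLap, mul_sub, sub_mul, hT]

lemma two_mul_dotProduct_diagonal_wdeg_sub_mulVec (hsymm : ∀ u v, w u v = w v u) (x : V → ℝ) :
    2 * (x ⬝ᵥ ((diagonal (wdeg w) - of w) *ᵥ x)) = ∑ u, ∑ v, w u v * (x u - x v) ^ 2 := by
  have hdiag : x ⬝ᵥ (diagonal (wdeg w) *ᵥ x) = ∑ u, (∑ v, w u v) * x u ^ 2 :=
    sum_congr rfl fun u _ => by rw [mulVec_diagonal, wdeg]; ring
  have hcol : ∑ u, ∑ v, w u v * x v ^ 2 = ∑ u, (∑ v, w u v) * x u ^ 2 := by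
    rw [sum_comm]
    simp only [sum_mul, hsymm]
  have hexp : ∀ u v, w u v * (x u - x v) ^ 2
      = w u v * x u ^ 2 + w u v * x v ^ 2 - 2 * (x u * (w u v * x v)) := fun u v => by ring
  simp only [hexp, sum_add_distrib, sum_sub_distrib, hcol, ← mul_sum, ← sum_mul]
  rw [sub_mulVec, dotProduct_sub, hdiag]
  simp only [dotProduct, mulVec, of_apply]
  ring

lemma posSemidef_diagonal_wdeg_sub (hsymm : ∀ u v, w u v = w v u) (hnonneg : ∀ u v, 0 ≤ w u v) :
    (diagonal (wdeg w) - of w).PosSemidef := by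
  refine .of_dotProduct_mulVec_nonneg ?_ fun x => ?_
  · refine (isHermitian_diagonal _).sub ?_
    ext u v
    exact hsymm v u
  · have hsq : 0 ≤ ∑ u, ∑ v, w u v * (star x u - star x v) ^ 2 :=
      sum_nonneg fun u _ => sum_nonneg fun v _ => mul_nonneg (hnonneg u v) (sq_nonneg _)
    rw [star_trivial] at hsq ⊢
    linarith [two_mul_dotProduct_diagonal_wdeg_sub_mulVec hsymm x]

lemma wLap_posSemidef (hsymm : ∀ u v, w u v = w v u) (hnonneg : ∀ u v, 0 ≤ w u v)
    (hdeg : ∀ x, 0 < wdeg w x) : (wLap w).PosSemidef := by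
  rw [wLap_eq hdeg]
  simpa [invSqrtT] using (posSemidef_diagonal_wdeg_sub hsymm hnonneg).conjTranspose_mul_mul_same
    (invSqrtT w)

lemma invSqrtT_mulVec_sqrt_wdeg (hdeg : ∀ x, 0 < wdeg w x) :
    invSqrtT w *ᵥ (fun u => Real.sqrt (wdeg w u)) = fun _ => 1 := funext fun u => by
  rw [invSqrtT, mulVec_diagonal, inv_mul_cancel₀ (Real.sqrt_pos.mpr (hdeg u)).ne']

lemma wLap_mulVec_sqrt_wdeg (hdeg : ∀ x, 0 < wdeg w x) :
    wLap w *ᵥ (fun u => Real.sqrt (wdeg w u)) = 0 := by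
  have hconst : (diagonal (wdeg w) - of w) *ᵥ (fun _ => (1 : ℝ)) = 0 := funext fun u => by
    rw [sub_mulVec, Pi.sub_apply, mulVec_diagonal, Pi.zero_apply, sub_eq_zero]
    simp [mulVec, dotProduct, wdeg]
  rw [wLap_eq hdeg, ← mulVec_mulVec, invSqrtT_mulVec_sqrt_wdeg hdeg, ← mulVec_mulVec, hconst,
    mulVec_zero]

lemma dotProduct_sqrt_wdeg_of_vecMul_invSqrtT (hdeg : ∀ x, 0 < wdeg w x) (x : V → ℝ) :
    (x ᵥ* invSqrtT w) ⬝ᵥ (fun u => Real.sqrt (wdeg w u)) = ∑ u, x u := by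
  rw [← dotProduct_mulVec, invSqrtT_mulVec_sqrt_wdeg hdeg]
  simp [dotProduct]

lemma semiconjBy_invSqrtT (hdeg : ∀ x, 0 < wdeg w x) (α : ℝ) :
    SemiconjBy (invSqrtT w) (1 - (1 - α) • wLap w) (wTrans w α) := by
  have hTinvT : (diagonal fun x => (wdeg w x)⁻¹) * diagonal (wdeg w) = 1 := by
    rw [diagonal_mul_diagonal, ← diagonal_one]
    exact congrArg diagonal (funext fun x => inv_mul_cancel₀ (hdeg x).ne')
  calc invSqrtT w * (1 - (1 - α) • wLap w)
      = invSqrtT w - (1 - α) • (invSqrtT w * invSqrtT w * (diagonal (wdeg w) - of w)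
          * invSqrtT w) := by
        rw [wLap_eq hdeg, mul_sub, mul_one, mul_smul_comm, mul_assoc, mul_assoc, mul_assoc]
    _ = invSqrtT w - (1 - α) • (invSqrtT w
          - (diagonal fun x => (wdeg w x)⁻¹) * of w * invSqrtT w) := by
        rw [invSqrtT_mul_invSqrtT hdeg, mul_sub, hTinvT, sub_mul, one_mul]
    _ = wTrans w α * invSqrtT w := by
        rw [wTrans, add_mul, smul_mul_assoc, one_mul, smul_mul_assoc]
        module

lemma wdeg_vecMul_wTrans (hsymm : ∀ u v, w u v = w v u) (hdeg : ∀ x, 0 < wdeg w x) (α : ℝ) :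
    wdeg w ᵥ* wTrans w α = wdeg w := by
  have hunit : wdeg w ᵥ* (diagonal fun x => (wdeg w x)⁻¹) = fun _ => 1 := funext fun x => by
    rw [vecMul_diagonal, mul_inv_cancel₀ (hdeg x).ne']
  have hcol : (fun _ => (1 : ℝ)) ᵥ* of w = wdeg w := funext fun v => by
    simp [vecMul, dotProduct, wdeg, hsymm]
  rw [wTrans, vecMul_add, vecMul_smul, vecMul_one, vecMul_smul, ← vecMul_vecMul, hunit, hcol]
  module

end WeightedGraph

/-- mixing of the α-lazy random walk on a weighted graph. -/
theorem stmt_0 {V : Type*} [Fintype V] [DecidableEq V]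
    (w : V → V → ℝ)
    (hsymm : ∀ u v, w u v = w v u)
    (hnonneg : ∀ u v, 0 ≤ w u v)
    (hdegpos : ∀ x, 0 < wdeg w x)
    (n : ℕ) (hn2 : 2 ≤ n)
    (μ : Fin n → ℝ) (hμ : IsEigenSeq (wLap w) μ)
    (α : ℝ)
    (π f₀ : V → ℝ)
    (hπ : ∀ u, π u = wdeg w u / wvol w Finset.univ)
    (hf₀sum : ∑ v, f₀ v = 1)
    (f : ℕ → V → ℝ) (hf : ∀ k, f k = f₀ ᵥ* (wTrans w α) ^ k)
    (k : ℕ) :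
    euclNorm ((f k - π) ᵥ* invSqrtT w) ≤
      (max |1 - (1 - α) * μ ⟨1, by omega⟩| |1 - (1 - α) * μ ⟨n - 1, by omega⟩|) ^ k *
        euclNorm ((f₀ - π) ᵥ* invSqrtT w) := by
  obtain ⟨x₀, -⟩ := nonempty_of_sum_ne_zero (hf₀sum.symm ▸ one_ne_zero : ∑ v, f₀ v ≠ 0)
  have hvol : wvol w univ ≠ 0 := (sum_pos (fun x _ => hdegpos x) ⟨x₀, mem_univ x₀⟩).ne'
  have hπ_eq : π = (wvol w univ)⁻¹ • wdeg w := funext fun u => by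
    rw [hπ, div_eq_inv_mul]; rfl
  have hπ_sum : ∑ u, π u = 1 := by
    rw [hπ_eq]
    simp only [Pi.smul_apply, smul_eq_mul, ← mul_sum]
    exact inv_mul_cancel₀ hvol
  have hπ_stat : π ᵥ* wTrans w α ^ k = π := vecMul_pow_eq_self (by
    rw [hπ_eq, smul_vecMul, wdeg_vecMul_wTrans hsymm hdegpos]) k
  have hfk : (f k - π) ᵥ* invSqrtT w
      = ((f₀ - π) ᵥ* invSqrtT w) ᵥ* (1 - (1 - α) • wLap w) ^ k := by
    rw [vecMul_vecMul, ((semiconjBy_invSqrtT hdegpos α).pow_right k).eq, ← vecMul_vecMul,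
      sub_vecMul _ f₀, hπ_stat, hf]
  rw [hfk]
  refine hμ.euclNorm_vecMul_one_sub_smul_pow_le (wLap_posSemidef hsymm hnonneg hdegpos) (by omega)
    (fun h => (Real.sqrt_pos.mpr (hdegpos x₀)).ne' (congrFun h x₀))
    (wLap_mulVec_sqrt_wdeg hdegpos) ?_ (1 - α) k
  simp only [dotProduct_sqrt_wdeg_of_vecMul_invSqrtT hdegpos, Pi.sub_apply, sum_sub_distrib,
    hf₀sum, hπ_sum, sub_self]
end
end

section
/- Let D be a Eulerian directed graph on n vertices with all degrees positive and let 0 < α < 1. Let π be the row vector with π(u) = d_u/vol(D), let f_0 be any vertex probability distribution on V (a row vector with nonnegative entries summing to 1), and let f_k = f_0 P_α^k for k ≥ 0. Then ‖(f_k − π) T^{-1/2}‖ ≤ σ_α^k · ‖(f_0 − π) T^{-1/2}‖. -/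
open Matrix Polynomial

noncomputable section

/-- The (out-)degree of a vertex in a directed graph with adjacency matrix `A`. -/
def ddeg {V : Type*} [Fintype V] (A : Matrix V V ℝ) (x : V) : ℝ := ∑ y, A x y

/-- The diagonal matrix `T^{-1/2}` of a directed graph. -/
def dInvSqrtT {V : Type*} [Fintype V] [DecidableEq V] (A : Matrix V V ℝ) : Matrix V V ℝ :=
  Matrix.diagonal fun x => (Real.sqrt (ddeg A x))⁻¹

/-- The non-symmetric Laplacian `vecL = I - T^{-1/2} A T^{-1/2}` of a directed graph. -/
def dvecL {V : Type*} [Fintype V] [DecidableEq V] (A : Matrix V V ℝ) : Matrix V V ℝ :=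
  1 - dInvSqrtT A * A * dInvSqrtT A

/-- The Laplacian `(vecL + vecLᵀ)/2` of a directed graph. -/
def dLap {V : Type*} [Fintype V] [DecidableEq V] (A : Matrix V V ℝ) : Matrix V V ℝ :=
  (1 / 2 : ℝ) • (dvecL A + (dvecL A)ᵀ)

/-- The matrix `L_α = I - (1-α) vecL = T^{1/2} P_α T^{-1/2}`. -/
def dLalpha {V : Type*} [Fintype V] [DecidableEq V] (A : Matrix V V ℝ) (α : ℝ) :
    Matrix V V ℝ :=
  1 - (1 - α) • dvecL A

/-- The transition matrix `P_α = α I + (1-α) T⁻¹ A` of the α-lazy random walk. -/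
def dTrans {V : Type*} [Fintype V] [DecidableEq V] (A : Matrix V V ℝ) (α : ℝ) :
    Matrix V V ℝ :=
  α • (1 : Matrix V V ℝ) + (1 - α) • ((Matrix.diagonal fun x => (ddeg A x)⁻¹) * A)

/-- The volume of a set of vertices of a directed graph. -/
def dvol {V : Type*} [Fintype V] (A : Matrix V V ℝ) (X : Finset V) : ℝ :=
  ∑ x ∈ X, ddeg A x

/-- The unit vector `φ₀` with `φ₀(x) = √(d_x)/√(vol D)`. -/
def dphi {V : Type*} [Fintype V] (A : Matrix V V ℝ) : V → ℝ :=
  fun x => Real.sqrt (ddeg A x) / Real.sqrt (dvol A Finset.univ)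

/-- The set of values `‖L_α f‖ / ‖f‖` over nonzero vectors `f` orthogonal to `φ₀ᵀ`;
its greatest element is the second largest singular value `σ_α` of `L_α`. -/
def sigmaSet {V : Type*} [Fintype V] [DecidableEq V] (A : Matrix V V ℝ) (α : ℝ) : Set ℝ :=
  {r | ∃ f : V → ℝ, f ≠ 0 ∧ (∑ x, f x * dphi A x) = 0 ∧
    r = euclNorm (dLalpha A α *ᵥ f) / euclNorm f}

/-!
Conjugating by `T^{-1/2}` turns the walk `f ↦ f P_α` into `h ↦ h L_α` on row vectors, and the
error `h_k = (f_k - π) T^{-1/2}` stays orthogonal to `φ₀`, because `π` is stationary (this is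
where the Eulerian condition enters) and `L_α φ₀ = φ₀`. For such `h`, with `g = h L_α`,
`‖g‖² = ⟨h, L_α g⟩ ≤ ‖h‖ ‖L_α g‖ ≤ σ_α ‖h‖ ‖g‖`, so each step contracts by `σ_α`.
-/

section EuclNorm

variable {m : Type*} [Fintype m]

lemma euclNorm_nonneg (g : m → ℝ) : 0 ≤ euclNorm g :=
  Real.sqrt_nonneg _

lemma euclNorm_mul_self (g : m → ℝ) : euclNorm g * euclNorm g = g ⬝ᵥ g := by
  rw [euclNorm, Real.mul_self_sqrt (Finset.sum_nonneg fun _ _ => sq_nonneg _)]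
  simp only [dotProduct, sq]

lemma dotProduct_le_euclNorm_mul_euclNorm (g h : m → ℝ) :
    g ⬝ᵥ h ≤ euclNorm g * euclNorm h :=
  Real.sum_mul_le_sqrt_mul_sqrt _ _ _

lemma euclNorm_vecMul_le {M : Matrix m m ℝ} {φ : m → ℝ} {σ : ℝ} (hφ : M *ᵥ φ = φ)
    (hσ : ∀ g, g ⬝ᵥ φ = 0 → euclNorm (M *ᵥ g) ≤ σ * euclNorm g)
    {h : m → ℝ} (hh : h ⬝ᵥ φ = 0) :
    euclNorm (h ᵥ* M) ≤ σ * euclNorm h := by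
  set g := h ᵥ* M
  have hg : g ⬝ᵥ φ = 0 := by rw [← dotProduct_mulVec, hφ, hh]
  have hσh : 0 ≤ σ * euclNorm h := (euclNorm_nonneg _).trans (hσ h hh)
  have hsq : euclNorm g * euclNorm g ≤ σ * euclNorm h * euclNorm g :=
    calc euclNorm g * euclNorm g = h ⬝ᵥ (M *ᵥ g) := by
          rw [euclNorm_mul_self, dotProduct_mulVec]
      _ ≤ euclNorm h * euclNorm (M *ᵥ g) := dotProduct_le_euclNorm_mul_euclNorm _ _
      _ ≤ euclNorm h * (σ * euclNorm g) :=
          mul_le_mul_of_nonneg_left (hσ g hg) (euclNorm_nonneg _)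
      _ = σ * euclNorm h * euclNorm g := by ring
  nlinarith [euclNorm_nonneg g]

lemma euclNorm_vecMul_pow_le [DecidableEq m] {M : Matrix m m ℝ} {φ : m → ℝ} {σ : ℝ}
    (hσ0 : 0 ≤ σ) (hφ : M *ᵥ φ = φ) (hσ : ∀ g, g ⬝ᵥ φ = 0 → euclNorm (M *ᵥ g) ≤ σ * euclNorm g)
    {h : m → ℝ} (hh : h ⬝ᵥ φ = 0) (k : ℕ) :
    euclNorm (h ᵥ* M ^ k) ≤ σ ^ k * euclNorm h := by
  induction k generalizing h with
  | zero => simp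
  | succ k ih =>
    have hhM : (h ᵥ* M) ⬝ᵥ φ = 0 := by rw [← dotProduct_mulVec, hφ, hh]
    calc euclNorm (h ᵥ* M ^ (k + 1)) = euclNorm ((h ᵥ* M) ᵥ* M ^ k) := by
          rw [pow_succ', vecMul_vecMul]
      _ ≤ σ ^ k * euclNorm (h ᵥ* M) := ih hhM
      _ ≤ σ ^ k * (σ * euclNorm h) :=
          mul_le_mul_of_nonneg_left (euclNorm_vecMul_le hφ hσ hh) (pow_nonneg hσ0 k)
      _ = σ ^ (k + 1) * euclNorm h := by ring

end EuclNorm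

section Digraph

variable {V : Type*} [Fintype V] {A : Matrix V V ℝ}

def stationaryDist (A : Matrix V V ℝ) : V → ℝ := fun u => ddeg A u / dvol A Finset.univ

lemma sum_stationaryDist (hvol : dvol A Finset.univ ≠ 0) : ∑ u, stationaryDist A u = 1 := by
  simp only [stationaryDist, ← Finset.sum_div]
  exact div_self hvol

variable [DecidableEq V]

lemma ddeg_vecMul_dTrans (hEuler : ∀ x, (∑ y, A x y) = ∑ y, A y x)
    (hdeg : ∀ x, ddeg A x ≠ 0) (α : ℝ) :
    ddeg A ᵥ* dTrans A α = ddeg A := by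
  have hdiag : ddeg A ᵥ* diagonal (fun x => (ddeg A x)⁻¹) = 1 := by
    ext x
    rw [vecMul_diagonal, mul_inv_cancel₀ (hdeg x), Pi.one_apply]
  have hA : (1 : V → ℝ) ᵥ* A = ddeg A := by
    ext y
    simp only [vecMul, dotProduct, Pi.one_apply, one_mul, ddeg, hEuler y]
  rw [dTrans, vecMul_add, vecMul_smul, vecMul_smul, vecMul_one, ← vecMul_vecMul, hdiag, hA,
    ← add_smul, add_sub_cancel, one_smul]

lemma stationaryDist_vecMul_dTrans_pow (hEuler : ∀ x, (∑ y, A x y) = ∑ y, A y x)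
    (hdeg : ∀ x, ddeg A x ≠ 0) (α : ℝ) (k : ℕ) :
    stationaryDist A ᵥ* dTrans A α ^ k = stationaryDist A := by
  have hπ : stationaryDist A = (dvol A Finset.univ)⁻¹ • ddeg A := by
    ext u
    simp only [stationaryDist, Pi.smul_apply, smul_eq_mul, div_eq_inv_mul]
  induction k with
  | zero => rw [pow_zero, vecMul_one]
  | succ k ih =>
    rw [pow_succ, ← vecMul_vecMul, ih, hπ, smul_vecMul, ddeg_vecMul_dTrans hEuler hdeg]

lemma dInvSqrtT_mulVec_dphi (hdeg : ∀ x, 0 < ddeg A x) :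
    dInvSqrtT A *ᵥ dphi A = (Real.sqrt (dvol A Finset.univ))⁻¹ • 1 := by
  ext x
  have hsqrt : Real.sqrt (ddeg A x) ≠ 0 := Real.sqrt_ne_zero'.2 (hdeg x)
  rw [dInvSqrtT, mulVec_diagonal, dphi, div_eq_mul_inv, inv_mul_cancel_left₀ hsqrt,
    Pi.smul_apply, Pi.one_apply, smul_eq_mul, mul_one]

lemma dLalpha_mulVec_dphi (hdeg : ∀ x, 0 < ddeg A x) (α : ℝ) :
    dLalpha A α *ᵥ dphi A = dphi A := by
  have hrow : A *ᵥ 1 = ddeg A := funext fun y => dotProduct_one (A y)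
  have hfix : (dInvSqrtT A * A * dInvSqrtT A) *ᵥ dphi A = dphi A := by
    ext x
    rw [Matrix.mul_assoc, ← mulVec_mulVec, ← mulVec_mulVec, dInvSqrtT_mulVec_dphi hdeg,
      mulVec_smul, hrow, dInvSqrtT, mulVec_diagonal, Pi.smul_apply, smul_eq_mul, dphi,
      mul_left_comm, inv_mul_eq_div, inv_mul_eq_div, Real.div_sqrt]
  rw [dLalpha, dvecL, sub_mulVec, smul_mulVec, sub_mulVec, one_mulVec, hfix, sub_self,
    smul_zero, sub_zero]

lemma dTrans_mul_dInvSqrtT (hdeg : ∀ x, 0 < ddeg A x) (α : ℝ) :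
    dTrans A α * dInvSqrtT A = dInvSqrtT A * dLalpha A α := by
  have hsq : dInvSqrtT A * dInvSqrtT A = diagonal fun x => (ddeg A x)⁻¹ := by
    rw [dInvSqrtT, diagonal_mul_diagonal]
    congr 1
    ext x
    rw [← mul_inv, Real.mul_self_sqrt (hdeg x).le]
  rw [dLalpha, dvecL, dTrans, ← hsq]
  simp only [Matrix.add_mul, Matrix.mul_sub, Matrix.mul_smul, Matrix.smul_mul, Matrix.one_mul,
    Matrix.mul_one, Matrix.mul_assoc]
  module

lemma dTrans_pow_mul_dInvSqrtT (hdeg : ∀ x, 0 < ddeg A x) (α : ℝ) (k : ℕ) :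
    dTrans A α ^ k * dInvSqrtT A = dInvSqrtT A * dLalpha A α ^ k :=
  ((SemiconjBy.pow_right (dTrans_mul_dInvSqrtT hdeg α).symm k)).symm

lemma vecMul_dInvSqrtT_dotProduct_dphi (hdeg : ∀ x, 0 < ddeg A x) {f₀ : V → ℝ}
    (hf₀sum : ∑ v, f₀ v = 1) (hvol : dvol A Finset.univ ≠ 0) :
    ((f₀ - stationaryDist A) ᵥ* dInvSqrtT A) ⬝ᵥ dphi A = 0 := by
  rw [← dotProduct_mulVec, dInvSqrtT_mulVec_dphi hdeg, dotProduct_smul, sub_dotProduct,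
    dotProduct_one, dotProduct_one, hf₀sum, sum_stationaryDist hvol, sub_self, smul_zero]

lemma sigmaSet_nonneg {α r : ℝ} (hr : r ∈ sigmaSet A α) : 0 ≤ r := by
  obtain ⟨g, -, -, rfl⟩ := hr
  exact div_nonneg (euclNorm_nonneg _) (euclNorm_nonneg _)

lemma euclNorm_dLalpha_mulVec_le {α σ : ℝ} (hσ : IsGreatest (sigmaSet A α) σ) {g : V → ℝ}
    (hg : g ⬝ᵥ dphi A = 0) :
    euclNorm (dLalpha A α *ᵥ g) ≤ σ * euclNorm g := by
  rcases eq_or_ne g 0 with rfl | hg0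
  · simp [euclNorm]
  have hpos : 0 < euclNorm g := by
    refine lt_of_le_of_ne (euclNorm_nonneg g) fun h0 => hg0 ?_
    have := euclNorm_mul_self g
    rwa [← h0, zero_mul, eq_comm, dotProduct_self_eq_zero] at this
  exact (div_le_iff₀ hpos).1 (hσ.2 ⟨g, hg0, hg, rfl⟩)

end Digraph

theorem stmt_7_general {V : Type*} [Fintype V] [DecidableEq V]
    (A : Matrix V V ℝ)
    (hEuler : ∀ x, (∑ y, A x y) = ∑ y, A y x)
    (hdegpos : ∀ x, 0 < ddeg A x)
    (α : ℝ)
    (σα : ℝ) (hσα : IsGreatest (sigmaSet A α) σα)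
    (π f₀ : V → ℝ)
    (hπ : ∀ u, π u = ddeg A u / dvol A Finset.univ)
    (hf₀sum : ∑ v, f₀ v = 1)
    (f : ℕ → V → ℝ) (hf : ∀ k, f k = f₀ ᵥ* (dTrans A α) ^ k)
    (k : ℕ) :
    euclNorm ((f k - π) ᵥ* dInvSqrtT A) ≤ σα ^ k * euclNorm ((f₀ - π) ᵥ* dInvSqrtT A) := by
  obtain rfl : π = stationaryDist A := funext hπ
  have hdeg : ∀ x, ddeg A x ≠ 0 := fun x => (hdegpos x).ne'
  have hvol : dvol A Finset.univ ≠ 0 := by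
    have hne : (Finset.univ : Finset V).Nonempty :=
      Finset.nonempty_of_sum_ne_zero (by rw [hf₀sum]; exact one_ne_zero)
    exact (Finset.sum_pos (fun x _ => hdegpos x) hne).ne'
  have hconj : (f k - stationaryDist A) ᵥ* dInvSqrtT A
      = ((f₀ - stationaryDist A) ᵥ* dInvSqrtT A) ᵥ* dLalpha A α ^ k := by
    rw [hf, ← stationaryDist_vecMul_dTrans_pow hEuler hdeg α k, ← sub_vecMul, vecMul_vecMul,
      dTrans_pow_mul_dInvSqrtT hdegpos, ← vecMul_vecMul,
      stationaryDist_vecMul_dTrans_pow hEuler hdeg]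
  rw [hconj]
  exact euclNorm_vecMul_pow_le (sigmaSet_nonneg hσα.1) (dLalpha_mulVec_dphi hdegpos α)
    (fun g hg => euclNorm_dLalpha_mulVec_le hσα hg)
    (vecMul_dInvSqrtT_dotProduct_dphi hdegpos hf₀sum hvol) k

/-- mixing of the α-lazy random walk on a Eulerian directed graph. -/
theorem stmt_7 {V : Type*} [Fintype V] [DecidableEq V]
    (A : Matrix V V ℝ)
    (h01 : ∀ x y, A x y = 0 ∨ A x y = 1)
    (hEuler : ∀ x, (∑ y, A x y) = ∑ y, A y x)
    (hdegpos : ∀ x, 0 < ddeg A x)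
    (α : ℝ) (hα0 : 0 < α) (hα1 : α < 1)
    (σα : ℝ) (hσα : IsGreatest (sigmaSet A α) σα)
    (π f₀ : V → ℝ)
    (hπ : ∀ u, π u = ddeg A u / dvol A Finset.univ)
    (hf₀nonneg : ∀ v, 0 ≤ f₀ v) (hf₀sum : ∑ v, f₀ v = 1)
    (f : ℕ → V → ℝ) (hf : ∀ k, f k = f₀ ᵥ* (dTrans A α) ^ k)
    (k : ℕ) :
    euclNorm ((f k - π) ᵥ* dInvSqrtT A) ≤ σα ^ k * euclNorm ((f₀ - π) ᵥ* dInvSqrtT A) :=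
  stmt_7_general A hEuler hdegpos α σα hσα π f₀ hπ hf₀sum f hf k
end
end
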